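/- Let N ≥ 1 and let rᵢ > 0, rᵢ* > 0, αᵢ ∈ ℝ for i = 1,…,N (indices mod N). Define aᵢ = (1/rᵢ*)(1/rᵢ - αᵢ/2), cᵢ = (1/rᵢ*)(1/rᵢ + αᵢ/2), bᵢ = aᵢ + cᵢ. If the time step τ satisfies τ = 1/(η(1+λ)) with λ > 0 and η = (4/r_min)(1/r_min + |α|_max/2), where r_min = min_i rᵢ and |α|_max = max_i |αᵢ|, then the cyclic tridiagonal matrix with diagonal entries 1 + bᵢτ and off-diagonal entries -aᵢτ, -cᵢτ is strictly diagonally dominant, i.e., 1 + bᵢτ > |aᵢ|τ + |cᵢ|τ for every i. -/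
import Mathlib


open Finset

/-- Strict diagonal dominance of the cyclic tridiagonal matrix of the
semi-implicit scheme: with aᵢ = (1/rᵢ*)(1/rᵢ - αᵢ/2), cᵢ = (1/rᵢ*)(1/rᵢ + αᵢ/2),
bᵢ = aᵢ + cᵢ, dual lengths rᵢ* = (rᵢ + r_{i+1})/2 (indices mod N), and time step
τ = 1/(η(1+λ)), η = (4/r_min)(1/r_min + |α|_max/2), one has
1 + bᵢτ > |aᵢ|τ + |cᵢ|τ for every i. -/
theorem stmt_10 (N : ℕ) [NeZero N] (hN : 1 ≤ N) (r α : Fin N → ℝ)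
    (hr : ∀ i, 0 < r i) (lam : ℝ) (hlam : 0 < lam)
    (rs : Fin N → ℝ) (hrs : ∀ i, rs i = (r i + r (i + 1)) / 2)
    (hrspos : ∀ i, 0 < rs i)
    (a b c : Fin N → ℝ)
    (ha : ∀ i, a i = (1 / rs i) * (1 / r i - α i / 2))
    (hc : ∀ i, c i = (1 / rs i) * (1 / r i + α i / 2))
    (hb : ∀ i, b i = a i + c i)
    (rmin amax η τ : ℝ)
    (hne : (Finset.univ : Finset (Fin N)).Nonempty)
    (hrmin : rmin = Finset.univ.inf' hne r)
    (hamax : amax = Finset.univ.sup' hne (fun i => |α i|))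
    (hη : η = (4 / rmin) * (1 / rmin + amax / 2))
    (hτ : τ = 1 / (η * (1 + lam))) :
    ∀ i, |a i| * τ + |c i| * τ < 1 + b i * τ := by
  intro i
  have hrmin_pos : 0 < rmin := by
    rw [hrmin, Finset.lt_inf'_iff]
    exact fun j _ => hr j
  have hrmin_le : ∀ j, rmin ≤ r j := fun j =>
    hrmin ▸ Finset.inf'_le r (Finset.mem_univ j)
  have hamax_ge : ∀ j, |α j| ≤ amax := fun j =>
    hamax ▸ Finset.le_sup' (fun k => |α k|) (Finset.mem_univ j)
  have hamax_nonneg : 0 ≤ amax := le_trans (abs_nonneg _) (hamax_ge i)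
  have hrs_ge : rmin ≤ rs i := by
    rw [hrs]
    have h1 := hrmin_le i
    have h2 := hrmin_le (i + 1)
    linarith
  have hrsi := hrspos i
  have hri := hr i
  have hinv : 1 / rs i ≤ 1 / rmin := one_div_le_one_div_of_le hrmin_pos hrs_ge
  have hinvr : 1 / r i ≤ 1 / rmin := one_div_le_one_div_of_le hrmin_pos (hrmin_le i)
  have hripos : (0:ℝ) < 1 / r i := by positivity
  have hα1 := le_abs_self (α i)
  have hα2 := neg_abs_le (α i)
  have hαge := hamax_ge i
  have habs1 : |1 / r i - α i / 2| ≤ 1 / rmin + amax / 2 := by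
    rw [abs_le]; constructor <;> linarith
  have habs2 : |1 / r i + α i / 2| ≤ 1 / rmin + amax / 2 := by
    rw [abs_le]; constructor <;> linarith
  have hrspos' : (0:ℝ) < 1 / rs i := by positivity
  have hKpos : (0:ℝ) < 1 / rmin * (1 / rmin + amax / 2) := by positivity
  have ha_bound : |a i| ≤ 1 / rmin * (1 / rmin + amax / 2) := by
    rw [ha i, abs_mul, abs_of_pos hrspos']
    exact mul_le_mul hinv habs1 (abs_nonneg _) (by positivity)
  have hc_bound : |c i| ≤ 1 / rmin * (1 / rmin + amax / 2) := by
    rw [hc i, abs_mul, abs_of_pos hrspos']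
    exact mul_le_mul hinv habs2 (abs_nonneg _) (by positivity)
  have hηpos : 0 < η := by
    rw [hη]; positivity
  have hτpos : 0 < τ := by
    rw [hτ]; positivity
  have hητ : η * τ = 1 / (1 + lam) := by
    rw [hτ]; field_simp
  have hηeq : η = 4 * (1 / rmin * (1 / rmin + amax / 2)) := by
    rw [hη]; field_simp
  have hsum : 2 * (|a i| + |c i|) ≤ η := by
    rw [hηeq]; linarith
  have hmul : 2 * (|a i| + |c i|) * τ ≤ η * τ :=
    mul_le_mul_of_nonneg_right hsum hτpos.le
  have hlt : η * τ < 1 := by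
    rw [hητ]
    rw [div_lt_one (by linarith)]
    linarith
  have haτ : -|a i| * τ ≤ a i * τ :=
    mul_le_mul_of_nonneg_right (neg_abs_le (a i)) hτpos.le
  have hcτ : -|c i| * τ ≤ c i * τ :=
    mul_le_mul_of_nonneg_right (neg_abs_le (c i)) hτpos.le
  rw [hb i]
  nlinarith [hmul, hlt, haτ, hcτ]
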